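/- arXiv:1310.2872 — 3 statements merged into one kernel-verified Lean document; each statement's English description precedes it below -/
import Mathlib

section
/- Let G be a finite simple graph on vertex set {x_{11}, …, x_{n1}}, let m_1, …, m_n ≥ 2 be integers, and let G_1, …, G_n be connected finite simple graphs with V(G_i) = {x_{i1}, …, x_{im_i}}, and let G' = G(G_1, …, G_n). Suppose that x_{11} satisfies the exchange condition in G_1, i.e., for every independent set C of G_1 \ N_{G_1}[x_{11}] there exists y ∈ N_{G_1}(x_{11}) with C ∪ {y} independent in G_1 \ {x_{11}}. Then x_{11} satisfies the exchange condition in G': for every independent set A of G' \ N_{G'}[x_{11}] there exists y ∈ N_{G'}(x_{11}) such that A ∪ {y} is independent in G' \ {x_{11}}. -/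
variable {V : Type*} [DecidableEq V]

/-- `S` is an independent set of the induced subgraph of `G` on the vertex set `A`. -/
def IsIndepIn (G : SimpleGraph V) (A S : Finset V) : Prop :=
  S ⊆ A ∧ ∀ u ∈ S, ∀ v ∈ S, ¬G.Adj u v

/-- `S` is a maximal independent set of the induced subgraph of `G` on the vertex set `A`. -/
def IsMaxIndepIn (G : SimpleGraph V) (A S : Finset V) : Prop :=
  IsIndepIn G A S ∧ ∀ T, IsIndepIn G A T → S ⊆ T → S = T

/-- The induced subgraph of `G` on `A` is unmixed: all maximal independent sets
have the same cardinality. -/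
def UnmixedOn (G : SimpleGraph V) (A : Finset V) : Prop :=
  ∀ S T, IsMaxIndepIn G A S → IsMaxIndepIn G A T → S.card = T.card

open scoped Classical in
/-- The vertex set `A \ N_G[x]`. -/
noncomputable def delClosedNbhd (G : SimpleGraph V) (A : Finset V) (x : V) : Finset V :=
  A.filter fun y => y ≠ x ∧ ¬G.Adj x y

/-- The induced subgraph of `G` on `A` is vertex decomposable. -/
inductive VertexDecomposableOn (G : SimpleGraph V) : Finset V → Prop
  | edgeless (A : Finset V) (h : ∀ u ∈ A, ∀ v ∈ A, ¬G.Adj u v) : VertexDecomposableOn G A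
  | shed (A : Finset V) (x : V) (hx : x ∈ A)
      (hlink : VertexDecomposableOn G (delClosedNbhd G A x))
      (hdel : VertexDecomposableOn G (A.erase x))
      (hexch : ∀ S, IsIndepIn G (delClosedNbhd G A x) S →
        ∃ y ∈ A, G.Adj x y ∧ IsIndepIn G (A.erase x) (insert y S)) :
      VertexDecomposableOn G A

/-- `x` is a shedding vertex of the induced subgraph of `G` on `A`. -/
def IsSheddingVertexOn (G : SimpleGraph V) (A : Finset V) (x : V) : Prop :=
  x ∈ A ∧
  VertexDecomposableOn G (delClosedNbhd G A x) ∧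
  VertexDecomposableOn G (A.erase x) ∧
  ∀ S, IsIndepIn G (delClosedNbhd G A x) S →
    ∃ y ∈ A, G.Adj x y ∧ IsIndepIn G (A.erase x) (insert y S)

/-- The independence complex of the induced subgraph of `G` on `A` is shellable:
there is an ordering `F 0, F 1, …` of its facets (the maximal independent sets) such
that for every `i`, every face of the subcomplex `(⋃ j < i, ⟨F j⟩) ∩ ⟨F i⟩` is contained
in a face of that subcomplex of cardinality `(F i).card - 1` (i.e. the subcomplex is
pure of dimension `dim (F i) - 1`). -/
def ShellableOn (G : SimpleGraph V) (A : Finset V) : Prop :=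
  ∃ (t : ℕ) (F : Fin t → Finset V),
    Function.Injective F ∧
    (∀ S, IsMaxIndepIn G A S ↔ ∃ i, F i = S) ∧
    ∀ i : Fin t, ∀ S : Finset V, S ⊆ F i → (∃ j, j < i ∧ S ⊆ F j) →
      ∃ S' : Finset V, S ⊆ S' ∧ S' ⊆ F i ∧ (∃ j, j < i ∧ S' ⊆ F j) ∧
        S'.card = (F i).card - 1

/-- A graph is chordal if every cycle of length at least four has a chord, i.e. an
edge of the graph joining two vertices of the cycle that is not an edge of the cycle. -/
def IsChordal (G : SimpleGraph V) : Prop :=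
  ∀ (x : V) (w : G.Walk x x), w.IsCycle → 4 ≤ w.length →
    ∃ u v, u ∈ w.support ∧ v ∈ w.support ∧ G.Adj u v ∧ s(u, v) ∉ w.edges

/-- The induced subgraph of `G` on `A` is a cycle graph on `m` vertices. -/
def IsCycleGraphOn (G : SimpleGraph V) (A : Finset V) (m : ℕ) : Prop :=
  (∀ u v, G.Adj u v → u ∈ A ∧ v ∈ A) ∧
  Nonempty (G.induce (A : Set V) ≃g SimpleGraph.cycleGraph m)

/-- The independence number of the induced subgraph of `G` on `A`. -/
noncomputable def indepNumOn (G : SimpleGraph V) (A : Finset V) : ℕ :=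
  sSup {k | ∃ S, IsIndepIn G A S ∧ S.card = k}

/-! Intersecting `A` with `B i₀` gives an independent set of `Gs i₀ \ N[x i₀]`, so the exchange
condition in `Gs i₀` supplies a neighbour `y ∈ B i₀ \ {x i₀}` of `x i₀`. Vertices of `B i₀` other
than the root are attached to nothing outside `Gs i₀`, so `y` has no neighbour in the rest of `A`
either. -/

theorem IsIndepIn.mono {V : Type*} {G H : SimpleGraph V} {A A' S T : Finset V} (hGH : G ≤ H)
    (hTS : T ⊆ S) (hTA : T ⊆ A') (hS : IsIndepIn H A S) : IsIndepIn G A' T :=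
  ⟨hTA, fun u hu v hv h => hS.2 u (hTS hu) v (hTS hv) (hGH h)⟩

section Exchange

variable {G H : SimpleGraph V} {A B S : Finset V} {x y : V}

theorem isIndepIn_insert_iff :
    IsIndepIn G A (insert y S) ↔ y ∈ A ∧ IsIndepIn G A S ∧ ∀ v ∈ S, ¬G.Adj y v := by
  simp only [IsIndepIn, Finset.insert_subset_iff, Finset.mem_insert, forall_eq_or_imp,
    SimpleGraph.irrefl, not_false_eq_true, true_and]
  constructor
  · rintro ⟨⟨hy, hS⟩, hyS, hSS⟩
    exact ⟨hy, ⟨hS, fun u hu => (hSS u hu).2⟩, hyS⟩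
  · rintro ⟨hy, ⟨hS, hSS⟩, hyS⟩
    exact ⟨⟨hy, hS⟩, hyS, fun u hu => ⟨fun h => hyS u hu h.symm, hSS u hu⟩⟩

theorem delClosedNbhd_subset_erase : delClosedNbhd G A x ⊆ A.erase x := by
  intro v hv
  simp only [delClosedNbhd, Finset.mem_filter] at hv
  exact Finset.mem_erase.mpr ⟨hv.2.1, hv.1⟩

theorem delClosedNbhd_inter_subset (hGH : G ≤ H) :
    delClosedNbhd H A x ∩ B ⊆ delClosedNbhd G B x := by
  intro v hv
  simp only [delClosedNbhd, Finset.mem_inter, Finset.mem_filter] at hv ⊢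
  exact ⟨hv.2, hv.1.2.1, fun h => hv.1.2.2 (hGH h)⟩

theorem exchange_of_le (hGH : G ≤ H) (hBA : B ⊆ A)
    (hlocal : ∀ y ∈ B.erase x, ∀ v, H.Adj y v → G.Adj y v ∧ v ∈ B)
    (hexch : ∀ C, IsIndepIn G (delClosedNbhd G B x) C →
      ∃ y ∈ B, G.Adj x y ∧ IsIndepIn G (B.erase x) (insert y C))
    (hS : IsIndepIn H (delClosedNbhd H A x) S) :
    ∃ y ∈ A, H.Adj x y ∧ IsIndepIn H (A.erase x) (insert y S) := by
  have hC : IsIndepIn G (delClosedNbhd G B x) (S ∩ B) :=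
    hS.mono hGH Finset.inter_subset_left
      ((Finset.inter_subset_inter_right hS.1).trans (delClosedNbhd_inter_subset hGH))
  obtain ⟨y, hyB, hxy, hins⟩ := hexch _ hC
  obtain ⟨hy, -, hyC⟩ := isIndepIn_insert_iff.mp hins
  refine ⟨y, hBA hyB, hGH hxy, isIndepIn_insert_iff.mpr ⟨Finset.erase_subset_erase x hBA hy,
    hS.mono le_rfl subset_rfl (hS.1.trans delClosedNbhd_subset_erase), fun v hv h => ?_⟩⟩
  obtain ⟨hyv, hvB⟩ := hlocal y hy v h
  exact hyC v (Finset.mem_inter.mpr ⟨hv, hvB⟩) hyv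

end Exchange

theorem attachment_adj_of_ne_root {V : Type*} {n : ℕ} {x : Fin n → V} {B : Fin n → Finset V}
    {G : SimpleGraph V} {Gs : Fin n → SimpleGraph V}
    (hGsupp : ∀ u v, G.Adj u v → (∃ i, u = x i) ∧ (∃ j, v = x j))
    (hxB : ∀ i, x i ∈ B i)
    (hBdisj : ∀ i j, i ≠ j → Disjoint (B i) (B j))
    (hGssupp : ∀ i, ∀ u v, (Gs i).Adj u v → u ∈ B i ∧ v ∈ B i)
    {i : Fin n} {y v : V} (hy : y ∈ B i) (hyx : y ≠ x i) (h : (G ⊔ ⨆ j, Gs j).Adj y v) :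
    (Gs i).Adj y v ∧ v ∈ B i := by
  have hunique : ∀ j, y ∈ B j → j = i := fun j hyj => by
    by_contra hji
    exact Finset.disjoint_left.mp (hBdisj j i hji) hyj hy
  rw [SimpleGraph.sup_adj, SimpleGraph.iSup_adj] at h
  rcases h with hG | ⟨j, hj⟩
  · obtain ⟨⟨j, rfl⟩, -⟩ := hGsupp _ _ hG
    exact absurd (by rw [hunique j (hxB j)]) hyx
  · obtain rfl := hunique j (hGssupp j _ _ hj).1
    exact ⟨hj, (hGssupp j _ _ hj).2⟩

theorem stmt_2_general {V : Type*} [DecidableEq V] (n : ℕ) (x : Fin n → V) (B : Fin n → Finset V)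
    (G : SimpleGraph V) (Gs : Fin n → SimpleGraph V)
    (hGsupp : ∀ u v, G.Adj u v → (∃ i, u = x i) ∧ (∃ j, v = x j))
    (hxB : ∀ i, x i ∈ B i)
    (hBdisj : ∀ i j, i ≠ j → Disjoint (B i) (B j))
    (hGssupp : ∀ i, ∀ u v, (Gs i).Adj u v → u ∈ B i ∧ v ∈ B i)
    (i₀ : Fin n)
    -- `x i₀` satisfies the exchange condition in `Gs i₀`
    (hexch : ∀ C, IsIndepIn (Gs i₀) (delClosedNbhd (Gs i₀) (B i₀) (x i₀)) C →
      ∃ y ∈ B i₀, (Gs i₀).Adj (x i₀) y ∧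
        IsIndepIn (Gs i₀) ((B i₀).erase (x i₀)) (insert y C)) :
    -- `x i₀` satisfies the exchange condition in the attachment graph
    ∀ A, IsIndepIn (G ⊔ ⨆ i, Gs i)
        (delClosedNbhd (G ⊔ ⨆ i, Gs i) (Finset.univ.biUnion B) (x i₀)) A →
      ∃ y ∈ Finset.univ.biUnion B, (G ⊔ ⨆ i, Gs i).Adj (x i₀) y ∧
        IsIndepIn (G ⊔ ⨆ i, Gs i) ((Finset.univ.biUnion B).erase (x i₀)) (insert y A) :=
  fun _ hA =>
    exchange_of_le (le_sup_of_le_right (le_iSup Gs i₀))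
      (Finset.subset_biUnion_of_mem B (Finset.mem_univ i₀))
      (fun _ hy _ h => attachment_adj_of_ne_root hGsupp hxB hBdisj hGssupp
        (Finset.mem_of_mem_erase hy) (Finset.ne_of_mem_erase hy) h)
      hexch hA

/-- If `x i₀` satisfies the exchange condition in `Gs i₀`, then it satisfies
the exchange condition in the attachment graph `G(G_1, …, G_n)`. -/
theorem stmt_2 {V : Type*} [DecidableEq V] (n : ℕ) (x : Fin n → V) (B : Fin n → Finset V)
    (G : SimpleGraph V) (Gs : Fin n → SimpleGraph V)
    (hxinj : Function.Injective x)
    (hGsupp : ∀ u v, G.Adj u v → (∃ i, u = x i) ∧ (∃ j, v = x j))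
    (hxB : ∀ i, x i ∈ B i)
    (hBcard : ∀ i, 2 ≤ (B i).card)
    (hBdisj : ∀ i j, i ≠ j → Disjoint (B i) (B j))
    (hGssupp : ∀ i, ∀ u v, (Gs i).Adj u v → u ∈ B i ∧ v ∈ B i)
    (hconn : ∀ i, ((Gs i).induce ((B i : Set V))).Connected)
    (i₀ : Fin n)
    -- `x i₀` satisfies the exchange condition in `Gs i₀`
    (hexch : ∀ C, IsIndepIn (Gs i₀) (delClosedNbhd (Gs i₀) (B i₀) (x i₀)) C →
      ∃ y ∈ B i₀, (Gs i₀).Adj (x i₀) y ∧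
        IsIndepIn (Gs i₀) ((B i₀).erase (x i₀)) (insert y C)) :
    -- `x i₀` satisfies the exchange condition in the attachment graph
    ∀ A, IsIndepIn (G ⊔ ⨆ i, Gs i)
        (delClosedNbhd (G ⊔ ⨆ i, Gs i) (Finset.univ.biUnion B) (x i₀)) A →
      ∃ y ∈ Finset.univ.biUnion B, (G ⊔ ⨆ i, Gs i).Adj (x i₀) y ∧
        IsIndepIn (G ⊔ ⨆ i, Gs i) ((Finset.univ.biUnion B).erase (x i₀)) (insert y A) :=
  stmt_2_general n x B G Gs hGsupp hxB hBdisj hGssupp i₀ hexch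
end

section
/- Let G be a finite simple graph on vertex set {x_{11}, …, x_{n1}} and for each i = 1, …, n let G_i be a cycle graph of length 5 containing the vertex x_{i1}. Then the attachment graph G(G_1, …, G_n), obtained by attaching a 5-cycle to each vertex of G, is vertex decomposable. -/
variable {V : Type*} [DecidableEq V]

/-!
Label the pentagon attached at `x i` as `c i 0, …, c i 4` around the cycle, with
`c i 0 = x i`. As long as some pentagon is complete, its root `x i` is a shedding vertex:
removing `x i` or `N[x i]` leaves every other pentagon complete or rootless, and an independent
set avoiding `N[x i]` meets the pentagon inside `{c i 2, c i 3}`, so `c i 4` (if `c i 2` is in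
it) or else `c i 1` can be added to it. Once no root is left, every pentagon is a subgraph of
the path `c i 1 - c i 2 - c i 3 - c i 4`, and the neighbour `v` of a leaf `w` is a shedding
vertex because `N[w] ⊆ N[v]`.
-/

section Shedding

variable {V : Type*} [DecidableEq V] {H : SimpleGraph V} {A S : Finset V} {x y : V}

theorem mem_delClosedNbhd : y ∈ delClosedNbhd H A x ↔ y ∈ A ∧ y ≠ x ∧ ¬H.Adj x y := by
  simp only [delClosedNbhd, Finset.mem_filter]

theorem delClosedNbhd_ssubset (hx : x ∈ A) : delClosedNbhd H A x ⊂ A :=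
  Finset.ssubset_iff_subset_ne.2
    ⟨fun _ hy => (mem_delClosedNbhd.1 hy).1,
      fun h => (mem_delClosedNbhd.1 (h ▸ hx)).2.1 rfl⟩

theorem IsIndepIn.insert (hS : IsIndepIn H A S) (hy : y ∈ A) (hyS : ∀ u ∈ S, ¬H.Adj y u) :
    IsIndepIn H A (insert y S) := by
  refine ⟨Finset.insert_subset hy hS.1, ?_⟩
  simp only [Finset.mem_insert]
  rintro u (rfl | hu) v (rfl | hv)
  · exact H.irrefl
  · exact hyS v hv
  · exact fun h => hyS u hu h.symm
  · exact hS.2 u hu v hv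

theorem VertexDecomposableOn.of_forall_exists_nonadj (hx : x ∈ A)
    (hlink : VertexDecomposableOn H (delClosedNbhd H A x))
    (hdel : VertexDecomposableOn H (A.erase x))
    (hexch : ∀ S, IsIndepIn H (delClosedNbhd H A x) S →
      ∃ y ∈ A, H.Adj x y ∧ ∀ u ∈ S, ¬H.Adj y u) :
    VertexDecomposableOn H A := by
  refine .shed A x hx hlink hdel fun S hS => ?_
  obtain ⟨y, hy, hxy, hyS⟩ := hexch S hS
  have hSdel : IsIndepIn H (A.erase x) S :=
    ⟨fun u hu => have hu' := mem_delClosedNbhd.1 (hS.1 hu); Finset.mem_erase.2 ⟨hu'.2.1, hu'.1⟩,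
      hS.2⟩
  exact ⟨y, hy, hxy, hSdel.insert (Finset.mem_erase.2 ⟨hxy.ne', hy⟩) hyS⟩

theorem VertexDecomposableOn.of_closedNbhd_subset {w : V} (hx : x ∈ A) (hw : w ∈ A)
    (hxw : H.Adj x w) (hdom : ∀ v ∈ A, H.Adj w v → v = x ∨ H.Adj x v)
    (hlink : VertexDecomposableOn H (delClosedNbhd H A x))
    (hdel : VertexDecomposableOn H (A.erase x)) :
    VertexDecomposableOn H A := by
  refine .of_forall_exists_nonadj hx hlink hdel fun S hS => ⟨w, hw, hxw, fun u hu hwu => ?_⟩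
  obtain ⟨huA, hux, hxu⟩ := mem_delClosedNbhd.1 (hS.1 hu)
  exact (hdom u huA hwu).elim hux hxu

theorem vertexDecomposableOn_of_forall_subset_exists_closedNbhd_subset
    (hA : ∀ B ⊆ A, (∃ u ∈ B, ∃ v ∈ B, H.Adj u v) →
      ∃ x ∈ B, ∃ w ∈ B, H.Adj x w ∧ ∀ v ∈ B, H.Adj w v → v = x ∨ H.Adj x v) :
    VertexDecomposableOn H A := by
  induction A using Finset.strongInduction with
  | H A ih =>
    by_cases hedge : ∃ u ∈ A, ∃ v ∈ A, H.Adj u v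
    · obtain ⟨x, hx, w, hw, hxw, hdom⟩ := hA A subset_rfl hedge
      have hsub : ∀ B ⊂ A, VertexDecomposableOn H B := fun B hB =>
        ih B hB fun C hC => hA C (hC.trans hB.subset)
      exact .of_closedNbhd_subset hx hw hxw hdom (hsub _ (delClosedNbhd_ssubset hx))
        (hsub _ (Finset.erase_ssubset hx))
    · push Not at hedge
      exact .edgeless A hedge

end Shedding

/-- `H` contains a copy `c i` of `K` for every `i`, and distinct copies are joined
only through their roots `c i r`. -/
structure IsRootedGluing {V ι W : Type*} (H : SimpleGraph V) (K : SimpleGraph W) (r : W)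
    (c : ι → W → V) : Prop where
  injective : Function.Injective (Function.uncurry c)
  adj_iff : ∀ i k l, H.Adj (c i k) (c i l) ↔ K.Adj k l
  eq_root_of_adj : ∀ i j k l, i ≠ j → H.Adj (c i k) (c j l) → k = r ∧ l = r

namespace IsRootedGluing

variable {V ι W : Type*} {H : SimpleGraph V} {K : SimpleGraph W} {r : W} {c : ι → W → V}

theorem eq_iff (hc : IsRootedGluing H K r c) {i j : ι} {k l : W} :
    c i k = c j l ↔ i = j ∧ k = l :=
  ⟨fun h => by simpa using hc.injective (a₁ := (i, k)) (a₂ := (j, l)) h,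
    by rintro ⟨rfl, rfl⟩; rfl⟩

theorem eq_of_adj_of_ne_root (hc : IsRootedGluing H K r c) {i j : ι} {k l : W} (hk : k ≠ r)
    (h : H.Adj (c i k) (c j l)) : i = j :=
  by_contra fun hij => hk (hc.eq_root_of_adj i j k l hij h).1

theorem adj_ne_root_iff (hc : IsRootedGluing H K r c) {i j : ι} {k l : W} (hk : k ≠ r) :
    H.Adj (c i k) (c j l) ↔ i = j ∧ K.Adj k l := by
  refine ⟨fun h => ?_, by rintro ⟨rfl, h⟩; exact (hc.adj_iff i k l).2 h⟩
  obtain rfl := hc.eq_of_adj_of_ne_root hk h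
  exact ⟨rfl, (hc.adj_iff i k l).1 h⟩

end IsRootedGluing

open SimpleGraph

theorem cycleGraph_five_exists_leaf_of_zero_notMem :
    ∀ s : Finset (Fin 5), 0 ∉ s → (∃ a ∈ s, ∃ b ∈ s, (cycleGraph 5).Adj a b) →
      ∃ k ∈ s, ∃ w ∈ s, (cycleGraph 5).Adj k w ∧ ∀ l ∈ s, (cycleGraph 5).Adj w l → l = k := by
  decide

section FiveCycles

variable {V ι : Type*} [DecidableEq V] {H : SimpleGraph V} {c : ι → Fin 5 → V}

theorem vertexDecomposableOn_of_root_notMem (hc : IsRootedGluing H (cycleGraph 5) 0 c)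
    {A : Finset V} (hAc : ∀ v ∈ A, ∃ i k, c i k = v) (hroot : ∀ i, c i 0 ∉ A) :
    VertexDecomposableOn H A := by
  refine vertexDecomposableOn_of_forall_subset_exists_closedNbhd_subset fun B hB hedge => ?_
  obtain ⟨_, hu, _, hv, huv⟩ := hedge
  obtain ⟨i, k, rfl⟩ := hAc _ (hB hu)
  obtain ⟨j, l, rfl⟩ := hAc _ (hB hv)
  have hk : k ≠ 0 := by rintro rfl; exact hroot i (hB hu)
  obtain ⟨rfl, hkl⟩ := (hc.adj_ne_root_iff hk).1 huv
  set s := Finset.univ.filter fun m => c i m ∈ B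
  have hs0 : 0 ∉ s := by simpa [s] using fun h => hroot i (hB h)
  obtain ⟨k', hk', w, hw, hk'w, hleaf⟩ := cycleGraph_five_exists_leaf_of_zero_notMem s hs0
    ⟨k, by simpa [s] using hu, l, by simpa [s] using hv, hkl⟩
  refine ⟨c i k', by simpa [s] using hk', c i w, by simpa [s] using hw,
    (hc.adj_iff i k' w).2 hk'w, fun v hv hwv => Or.inl ?_⟩
  obtain ⟨j, m, rfl⟩ := hAc v (hB hv)
  have hw0 : w ≠ 0 := by rintro rfl; exact hs0 hw
  obtain ⟨rfl, hwm⟩ := (hc.adj_ne_root_iff hw0).1 hwv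
  rw [hleaf m (by simpa [s] using hv) hwm]

theorem vertexDecomposableOn_of_root_mem_imp_mem (hc : IsRootedGluing H (cycleGraph 5) 0 c)
    {A : Finset V} (hAc : ∀ v ∈ A, ∃ i k, c i k = v)
    (hfull : ∀ i, c i 0 ∈ A → ∀ k, c i k ∈ A) :
    VertexDecomposableOn H A := by
  induction A using Finset.strongInduction with
  | H A ih =>
    by_cases hroot : ∀ i, c i 0 ∉ A
    · exact vertexDecomposableOn_of_root_notMem hc hAc hroot
    push Not at hroot
    obtain ⟨i, hi⟩ := hroot
    have hne : ∀ {j k}, c j 0 ≠ c i 0 → c j k ≠ c i 0 := fun h h' => by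
      obtain ⟨rfl, -⟩ := hc.eq_iff.1 h'
      exact h rfl
    refine .of_forall_exists_nonadj hi ?link ?del fun S hS => ?exch
    case link =>
      refine ih _ (delClosedNbhd_ssubset hi) (fun v hv => hAc v (mem_delClosedNbhd.1 hv).1)
        fun j hj k => mem_delClosedNbhd.2 ?_
      obtain ⟨hjA, hji, hadj⟩ := mem_delClosedNbhd.1 hj
      refine ⟨hfull j hjA k, hne hji, fun h => ?_⟩
      obtain ⟨-, rfl⟩ := hc.eq_root_of_adj i j 0 k (fun h' => hji (h' ▸ rfl)) h
      exact hadj h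
    case del =>
      refine ih _ (Finset.erase_ssubset hi) (fun v hv => hAc v (Finset.mem_of_mem_erase hv))
        fun j hj k => ?_
      obtain ⟨hji, hjA⟩ := Finset.mem_erase.1 hj
      exact Finset.mem_erase.2 ⟨hne hji, hfull j hjA k⟩
    case exch =>
      have h0 : c i 0 ∉ S := fun h => (mem_delClosedNbhd.1 (hS.1 h)).2.1 rfl
      have hS_adj : ∀ {a : Fin 5}, a ≠ 0 → ∀ u ∈ S, H.Adj (c i a) u →
          ∃ l, (cycleGraph 5).Adj a l ∧ c i l ∈ S := fun ha u hu h => by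
        obtain ⟨j, l, rfl⟩ := hAc u (mem_delClosedNbhd.1 (hS.1 hu)).1
        obtain ⟨rfl, hal⟩ := (hc.adj_ne_root_iff ha).1 h
        exact ⟨l, hal, hu⟩
      have adj4 : ∀ l : Fin 5, (cycleGraph 5).Adj 4 l → l = 0 ∨ l = 3 := by decide
      have adj1 : ∀ l : Fin 5, (cycleGraph 5).Adj 1 l → l = 0 ∨ l = 2 := by decide
      by_cases h2 : c i 2 ∈ S
      · refine ⟨c i 4, hfull i hi 4, (hc.adj_iff i 0 4).2 (by decide), fun u hu h => ?_⟩
        obtain ⟨l, hl, hlS⟩ := hS_adj (by decide) u hu h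
        obtain rfl | rfl := adj4 l hl
        · exact h0 hlS
        · exact hS.2 _ h2 _ hlS ((hc.adj_iff i 2 3).2 (by decide))
      · refine ⟨c i 1, hfull i hi 1, (hc.adj_iff i 0 1).2 (by decide), fun u hu h => ?_⟩
        obtain ⟨l, hl, hlS⟩ := hS_adj (by decide) u hu h
        obtain rfl | rfl := adj1 l hl
        · exact h0 hlS
        · exact h2 hlS

end FiveCycles

theorem IsCycleGraphOn.exists_labelling {V : Type*} {K : SimpleGraph V} {B : Finset V} {m : ℕ}
    [NeZero m] (h : IsCycleGraphOn K B m) {x : V} (hx : x ∈ B) :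
    ∃ f : Fin m → V, f 0 = x ∧ Set.range f = B ∧ Function.Injective f ∧
      ∀ k l, K.Adj (f k) (f l) ↔ (cycleGraph m).Adj k l := by
  obtain ⟨e⟩ := h.2
  set t := e ⟨x, hx⟩
  refine ⟨fun k => (e.symm (t + k)).1, by simp [t], ?_, fun k l hkl => ?_, fun k l => ?_⟩
  · refine Set.eq_of_subset_of_subset (Set.range_subset_iff.2 fun k => (e.symm _).2)
      fun v hv => ⟨e ⟨v, hv⟩ - t, ?_⟩
    simp
  · simpa using e.symm.injective (Subtype.ext hkl)
  · change (K.induce (B : Set V)).Adj _ _ ↔ _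
    rw [e.symm.map_adj_iff, cycleGraph_adj', cycleGraph_adj', add_sub_add_left_eq_sub,
      add_sub_add_left_eq_sub]

theorem isRootedGluing_sup_iSup {V ι W : Type*} {K : SimpleGraph W} {r : W} {x : ι → V}
    {B : ι → Finset V} {G : SimpleGraph V} {Gs : ι → SimpleGraph V} {c : ι → W → V}
    (hGsupp : ∀ u v, G.Adj u v → (∃ i, u = x i) ∧ (∃ j, v = x j))
    (hBdisj : ∀ i j, i ≠ j → Disjoint (B i) (B j))
    (hGs : ∀ i u v, (Gs i).Adj u v → u ∈ B i ∧ v ∈ B i)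
    (hcr : ∀ i, c i r = x i) (hcB : ∀ i, Set.range (c i) = B i)
    (hcinj : ∀ i, Function.Injective (c i))
    (hcadj : ∀ i k l, (Gs i).Adj (c i k) (c i l) ↔ K.Adj k l) :
    IsRootedGluing (G ⊔ ⨆ i, Gs i) K r c := by
  have hmem : ∀ i k, c i k ∈ B i := fun i k => by
    rw [← Finset.mem_coe, ← hcB i]
    exact Set.mem_range_self k
  have hidx : ∀ {i j k}, c i k ∈ B j → i = j := fun {i j k} h =>
    by_contra fun hij => Finset.disjoint_left.1 (hBdisj i j hij) (hmem i k) h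
  have hroot : ∀ {i k a}, c i k = x a → k = r := fun {i k a} h => by
    obtain rfl := hidx (h ▸ hcr a ▸ hmem a r)
    exact hcinj i (h.trans (hcr i).symm)
  refine ⟨fun ⟨i, k⟩ ⟨j, l⟩ h => ?_, fun i k l => ?_, fun i j k l hij h => ?_⟩
  · change c i k = c j l at h
    obtain rfl := hidx (h ▸ hmem j l)
    rw [hcinj i h]
  · simp only [SimpleGraph.sup_adj, SimpleGraph.iSup_adj]
    refine ⟨?_, fun h => Or.inr ⟨i, (hcadj i k l).2 h⟩⟩
    rintro (h | ⟨j, h⟩)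
    · obtain ⟨⟨a, ha⟩, ⟨b, hb⟩⟩ := hGsupp _ _ h
      rw [hroot ha, hroot hb] at h
      exact (G.irrefl h).elim
    · obtain rfl := hidx (hGs j _ _ h).1
      exact (hcadj i k l).1 h
  · simp only [SimpleGraph.sup_adj, SimpleGraph.iSup_adj] at h
    obtain h | ⟨m, h⟩ := h
    · obtain ⟨⟨a, ha⟩, ⟨b, hb⟩⟩ := hGsupp _ _ h
      exact ⟨hroot ha, hroot hb⟩
    · exact (hij ((hidx (hGs m _ _ h).1).trans (hidx (hGs m _ _ h).2).symm)).elim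

theorem stmt_5_general {V : Type*} [DecidableEq V] (n : ℕ) (x : Fin n → V) (B : Fin n → Finset V)
    (G : SimpleGraph V) (Gs : Fin n → SimpleGraph V)
    (hGsupp : ∀ u v, G.Adj u v → (∃ i, u = x i) ∧ (∃ j, v = x j))
    (hxB : ∀ i, x i ∈ B i)
    (hBdisj : ∀ i j, i ≠ j → Disjoint (B i) (B j))
    -- each `Gs i` is a cycle graph of length `5` on the vertex set `B i`
    (hcyc : ∀ i, IsCycleGraphOn (Gs i) (B i) 5) :
    VertexDecomposableOn (G ⊔ ⨆ i, Gs i) (Finset.univ.biUnion B) := by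
  choose c hc0 hcB hcinj hcadj using fun i => (hcyc i).exists_labelling (hxB i)
  have hglue := isRootedGluing_sup_iSup hGsupp hBdisj (fun i => (hcyc i).1) hc0 hcB hcinj hcadj
  refine vertexDecomposableOn_of_root_mem_imp_mem hglue (fun v hv => ?_) fun i _ k => ?_
  · obtain ⟨i, -, hv⟩ := Finset.mem_biUnion.1 hv
    obtain ⟨k, rfl⟩ := (hcB i).ge hv
    exact ⟨i, k, rfl⟩
  · refine Finset.mem_biUnion.2 ⟨i, Finset.mem_univ i, ?_⟩
    rw [← Finset.mem_coe, ← hcB i]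
    exact Set.mem_range_self k

/-- Attaching a `5`-cycle to each vertex of `G` yields a vertex
decomposable graph. -/
theorem stmt_5 {V : Type*} [DecidableEq V] (n : ℕ) (x : Fin n → V) (B : Fin n → Finset V)
    (G : SimpleGraph V) (Gs : Fin n → SimpleGraph V)
    (hxinj : Function.Injective x)
    (hGsupp : ∀ u v, G.Adj u v → (∃ i, u = x i) ∧ (∃ j, v = x j))
    (hxB : ∀ i, x i ∈ B i)
    (hBdisj : ∀ i j, i ≠ j → Disjoint (B i) (B j))
    -- each `Gs i` is a cycle graph of length `5` on the vertex set `B i`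
    (hcyc : ∀ i, IsCycleGraphOn (Gs i) (B i) 5) :
    VertexDecomposableOn (G ⊔ ⨆ i, Gs i) (Finset.univ.biUnion B) :=
  stmt_5_general n x B G Gs hGsupp hxB hBdisj hcyc
end

section
/- Let G be a finite simple unmixed graph and let x be a vertex of G that is not isolated. Then the independence number of G \ {x} equals the independence number of G, i.e., α(G \ {x}) = α(G). -/
variable {V : Type*} [DecidableEq V]

/-! In an unmixed graph every maximal independent set is maximum, and extending a neighbour of `x`
to a maximal independent set yields one that avoids `x`. -/

section

omit [DecidableEq V]

theorem IsIndepIn.mono_s9 {G : SimpleGraph V} {A B S : Finset V} (hS : IsIndepIn G A S)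
    (hAB : A ⊆ B) : IsIndepIn G B S :=
  ⟨hS.1.trans hAB, hS.2⟩

theorem isIndepIn_singleton {G : SimpleGraph V} {A : Finset V} {y : V} (hy : y ∈ A) :
    IsIndepIn G A {y} := by
  refine ⟨Finset.singleton_subset_iff.mpr hy, ?_⟩
  simp only [Finset.mem_singleton]
  rintro u rfl v rfl
  exact G.irrefl

open Classical in
theorem IsIndepIn.exists_isMaxIndepIn_superset {G : SimpleGraph V} {A S : Finset V}
    (hS : IsIndepIn G A S) : ∃ T, IsMaxIndepIn G A T ∧ S ⊆ T := by
  have hne : (A.powerset.filter fun T => IsIndepIn G A T ∧ S ⊆ T).Nonempty :=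
    ⟨S, by simp [hS, hS.1]⟩
  obtain ⟨T, hT, hmax⟩ := Finset.exists_max_image _ Finset.card hne
  simp only [Finset.mem_filter, Finset.mem_powerset] at hT hmax
  refine ⟨T, ⟨hT.2.1, fun T' hT' hTT' => ?_⟩, hT.2.2⟩
  exact Finset.eq_of_subset_of_card_le hTT' (hmax T' ⟨hT'.1, hT', hT.2.2.trans hTT'⟩)

theorem IsIndepIn.card_le_indepNumOn {G : SimpleGraph V} {A S : Finset V}
    (hS : IsIndepIn G A S) : S.card ≤ indepNumOn G A := by
  refine le_csSup ⟨A.card, ?_⟩ ⟨S, hS, rfl⟩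
  rintro k ⟨S', hS', rfl⟩
  exact Finset.card_le_card hS'.1

theorem indepNumOn_le {G : SimpleGraph V} {A : Finset V} {k : ℕ}
    (h : ∀ S, IsIndepIn G A S → S.card ≤ k) : indepNumOn G A ≤ k :=
  csSup_le' fun _ ⟨S, hS, hk⟩ => hk ▸ h S hS

theorem indepNumOn_mono (G : SimpleGraph V) {A B : Finset V} (hAB : A ⊆ B) :
    indepNumOn G A ≤ indepNumOn G B :=
  indepNumOn_le fun _ hS => (hS.mono_s9 hAB).card_le_indepNumOn

theorem UnmixedOn.card_eq_indepNumOn {G : SimpleGraph V} {A T : Finset V}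
    (hun : UnmixedOn G A) (hT : IsMaxIndepIn G A T) : T.card = indepNumOn G A := by
  refine le_antisymm hT.1.card_le_indepNumOn (indepNumOn_le fun S hS => ?_)
  obtain ⟨T', hT', hST'⟩ := hS.exists_isMaxIndepIn_superset
  exact (Finset.card_le_card hST').trans (hun T' T hT' hT).le

end

theorem stmt_9_general {V : Type*} [DecidableEq V] (G : SimpleGraph V) (A : Finset V)
    (hun : UnmixedOn G A) (x : V)
    -- `x` is not isolated
    (hniso : ∃ y ∈ A, G.Adj x y) :
    indepNumOn G (A.erase x) = indepNumOn G A := by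
  obtain ⟨y, hy, hxy⟩ := hniso
  obtain ⟨T, hT, hyT⟩ := (isIndepIn_singleton (G := G) hy).exists_isMaxIndepIn_superset
  have hxT : x ∉ T := fun hxT => hT.1.2 x hxT y (hyT (Finset.mem_singleton_self y)) hxy
  have hT_erase : IsIndepIn G (A.erase x) T :=
    ⟨fun t ht => Finset.mem_erase.mpr ⟨ne_of_mem_of_not_mem ht hxT, hT.1.1 ht⟩, hT.1.2⟩
  refine le_antisymm (indepNumOn_mono G (Finset.erase_subset x A)) ?_
  calc indepNumOn G A = T.card := (hun.card_eq_indepNumOn hT).symm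
    _ ≤ indepNumOn G (A.erase x) := hT_erase.card_le_indepNumOn

/-- If `G` is unmixed and `x` is a non-isolated vertex of `G`, then the
independence number of `G \ {x}` equals the independence number of `G`. -/
theorem stmt_9 {V : Type*} [DecidableEq V] (G : SimpleGraph V) (A : Finset V)
    (hun : UnmixedOn G A) (x : V) (hx : x ∈ A)
    -- `x` is not isolated
    (hniso : ∃ y ∈ A, G.Adj x y) :
    indepNumOn G (A.erase x) = indepNumOn G A :=
  stmt_9_general G A hun x hniso
end
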